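/- arXiv:2006.16446 — 2 statements merged into one kernel-verified Lean document; each statement's English description precedes it below -/
import Mathlib

section
/- Assume the Poisson-solution setting below. Then for every f ∈ M₁ one has the identity ℰ_β(f − ŵ, f + ŵ) = 1/c + ℰ_β(f − w̄, f − w̄), where c = ∫_D u ξ dx. Consequently, if ℰ_β(h,h) ≥ 0 for every h ∈ M₀, then ℰ_β(f − ŵ, f + ŵ) ≥ 1/c for every f ∈ M₁. -/
open MeasureTheory

noncomputable section

/-- Partial derivative of `f` in the `i`-th coordinate direction. -/
def pd {d : ℕ} (f : (Fin d → ℝ) → ℝ) (i : Fin d) (x : Fin d → ℝ) : ℝ :=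
  fderiv ℝ f x (Pi.single i 1)

/-- Divergence of a vector field on `ℝ^d`: `div F = Σ_i ∂_i F_i`. -/
def divg {d : ℕ} (F : (Fin d → ℝ) → (Fin d → ℝ)) (x : Fin d → ℝ) : ℝ :=
  ∑ i, fderiv ℝ (fun y => F y i) x (Pi.single i 1)

/-- The vector field `a∇g`, i.e. `(a∇g)_i = Σ_j a_{ij} ∂_j g`. -/
def aGrad {d : ℕ} (a : (Fin d → ℝ) → Matrix (Fin d) (Fin d) ℝ)
    (g : (Fin d → ℝ) → ℝ) (x : Fin d → ℝ) : Fin d → ℝ :=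
  fun i => ∑ j, a x i j * pd g j x

/-- The operator `Lg = ∇·(a∇g) + b·∇g`. -/
def Lop {d : ℕ} (a : (Fin d → ℝ) → Matrix (Fin d) (Fin d) ℝ)
    (b : (Fin d → ℝ) → (Fin d → ℝ)) (g : (Fin d → ℝ) → ℝ) (x : Fin d → ℝ) : ℝ :=
  divg (aGrad a g) x + ∑ i, b x i * pd g i x

/-- The formal adjoint `L̃f = ∇·(a∇f) − b·∇f − div(b) f`. -/
def Ladj {d : ℕ} (a : (Fin d → ℝ) → Matrix (Fin d) (Fin d) ℝ)
    (b : (Fin d → ℝ) → (Fin d → ℝ)) (f : (Fin d → ℝ) → ℝ) (x : Fin d → ℝ) : ℝ :=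
  divg (aGrad a f) x - (∑ i, b x i * pd f i x) - divg b x * f x

/-- `∇f · a ∇g = Σ_{i,j} (∂_i f) a_{ij} (∂_j g)`. -/
def quadF {d : ℕ} (a : (Fin d → ℝ) → Matrix (Fin d) (Fin d) ℝ)
    (f g : (Fin d → ℝ) → ℝ) (x : Fin d → ℝ) : ℝ :=
  ∑ i, ∑ j, pd f i x * a x i j * pd g j x

/-- `f` is C² on an open neighborhood of the closure of `D`. -/
def C2Near {d : ℕ} (D : Set (Fin d → ℝ)) (f : (Fin d → ℝ) → ℝ) : Prop :=
  ∃ U : Set (Fin d → ℝ), IsOpen U ∧ closure D ⊆ U ∧ ContDiffOn ℝ 2 f U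

/-- A vector field is C¹ on an open neighborhood of the closure of `D`. -/
def C1NearVF {d : ℕ} (D : Set (Fin d → ℝ)) (F : (Fin d → ℝ) → (Fin d → ℝ)) : Prop :=
  ∃ U : Set (Fin d → ℝ), IsOpen U ∧ closure D ⊆ U ∧ ∀ i, ContDiffOn ℝ 1 (fun x => F x i) U

/-- `D` has the divergence property: `∫_D div F = 0` for every vector field `F` which is
C¹ on an open neighborhood of the closure of `D` and vanishes on the frontier of `D`. -/
def DivProp {d : ℕ} (D : Set (Fin d → ℝ)) : Prop :=
  ∀ F : (Fin d → ℝ) → (Fin d → ℝ), C1NearVF D F → (∀ x ∈ frontier D, F x = 0) →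
    ∫ x in D, divg F x = 0

/-- The bilinear form `ℰ_β(f,g) = ∫_D f ((β−L)g) dx`. -/
def Eform {d : ℕ} (D : Set (Fin d → ℝ)) (a : (Fin d → ℝ) → Matrix (Fin d) (Fin d) ℝ)
    (b : (Fin d → ℝ) → (Fin d → ℝ)) (β : ℝ) (f g : (Fin d → ℝ) → ℝ) : ℝ :=
  ∫ x in D, f x * (β * g x - Lop a b g x)

/-- `M_δ`: functions that are C² near the closure of `D`, vanish on `∂D`, and have
`∫_D h ξ dx = δ`. -/
def MemM {d : ℕ} (D : Set (Fin d → ℝ)) (ξ : (Fin d → ℝ) → ℝ) (δ : ℝ)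
    (h : (Fin d → ℝ) → ℝ) : Prop :=
  C2Near D h ∧ (∀ x ∈ frontier D, h x = 0) ∧ (∫ x in D, h x * ξ x) = δ

/-!
Put `r = f − w̄`, so that `f − ŵ = r + w̃`, `f + ŵ = r + w` and `r ∈ M₀`. Expanding `ℰ_β`
bilinearly, `ℰ_β(r + w̃, r + w) = ℰ_β(r, r) + ℰ_β(r, w) + ℰ_β(w̃, r) + ℰ_β(w̃, w)`.
Since `(β − L)u = ξ`, `ℰ_β(h, u) = ∫_D h ξ`; and since the flux `f a∇g − g a∇f + f g b` has
divergence `f Lg − g L̃f` and vanishes on `∂D`,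
`ℰ_β(ũ, h) = ∫_D h (β − L̃)ũ = ∫_D h ξ`. So both cross terms equal `c⁻¹ ∫_D r ξ = 0`, while
`ℰ_β(w̃, w) = c⁻² ∫_D u ξ = 1/c`.
-/

open Filter Topology

section Calculus

variable {d : ℕ} {a : (Fin d → ℝ) → Matrix (Fin d) (Fin d) ℝ} {b : (Fin d → ℝ) → (Fin d → ℝ)}
  {F G : (Fin d → ℝ) → (Fin d → ℝ)} {f g : (Fin d → ℝ) → ℝ} {x : Fin d → ℝ}

lemma pd_add (hf : DifferentiableAt ℝ f x) (hg : DifferentiableAt ℝ g x) (i : Fin d) :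
    pd (fun y => f y + g y) i x = pd f i x + pd g i x := by
  simp [pd, fderiv_fun_add hf hg]

lemma pd_sub (hf : DifferentiableAt ℝ f x) (hg : DifferentiableAt ℝ g x) (i : Fin d) :
    pd (fun y => f y - g y) i x = pd f i x - pd g i x := by
  simp [pd, fderiv_fun_sub hf hg]

lemma pd_const_mul (hf : DifferentiableAt ℝ f x) (k : ℝ) (i : Fin d) :
    pd (fun y => k * f y) i x = k * pd f i x := by
  simp [pd, fderiv_const_mul hf k]

lemma pd_mul (hf : DifferentiableAt ℝ f x) (hg : DifferentiableAt ℝ g x) (i : Fin d) :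
    pd (fun y => f y * g y) i x = f x * pd g i x + g x * pd f i x := by
  simp [pd, fderiv_fun_mul hf hg]

lemma divg_eq_sum_pd : divg F x = ∑ i, pd (fun y => F y i) i x := rfl

lemma contDiffAt_pd (hf : ContDiffAt ℝ 2 f x) (i : Fin d) : ContDiffAt ℝ 1 (pd f i) x :=
  (hf.fderiv_right le_rfl).clm_apply contDiffAt_const

lemma contDiffAt_aGrad (ha : ∀ i j, ContDiff ℝ 1 fun y => a y i j) (hg : ContDiffAt ℝ 2 g x)
    (i : Fin d) : ContDiffAt ℝ 1 (fun y => aGrad a g y i) x :=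
  ContDiffAt.sum fun j _ => (ha i j).contDiffAt.mul (contDiffAt_pd hg j)

lemma continuousAt_divg (hF : ∀ i, ContDiffAt ℝ 1 (fun y => F y i) x) :
    ContinuousAt (divg F) x :=
  tendsto_finsetSum _ fun i _ =>
    ((hF i).continuousAt_fderiv one_ne_zero).clm_apply continuousAt_const

lemma continuousAt_Lop (ha : ∀ i j, ContDiff ℝ 1 fun y => a y i j)
    (hb : ∀ i, ContDiff ℝ 1 fun y => b y i) (hg : ContDiffAt ℝ 2 g x) :
    ContinuousAt (Lop a b g) x :=
  (continuousAt_divg (contDiffAt_aGrad ha hg)).add <| tendsto_finsetSum _ fun i _ =>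
    (hb i).continuous.continuousAt.mul (contDiffAt_pd hg i).continuousAt

lemma continuousAt_Ladj (ha : ∀ i j, ContDiff ℝ 1 fun y => a y i j)
    (hb : ∀ i, ContDiff ℝ 1 fun y => b y i) (hf : ContDiffAt ℝ 2 f x) :
    ContinuousAt (Ladj a b f) x :=
  ((continuousAt_divg (contDiffAt_aGrad ha hf)).sub <| tendsto_finsetSum _ fun i _ =>
    (hb i).continuous.continuousAt.mul (contDiffAt_pd hf i).continuousAt).sub <|
    (continuousAt_divg fun i => (hb i).contDiffAt).mul hf.continuousAt

lemma Filter.EventuallyEq.divg_eq (h : F =ᶠ[𝓝 x] G) : divg F x = divg G x :=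
  Finset.sum_congr rfl fun i _ => by
    rw [EventuallyEq.fderiv_eq (h.mono fun y hy => congrFun hy i)]

lemma divg_add_const_mul (hF : ∀ i, DifferentiableAt ℝ (fun y => F y i) x)
    (hG : ∀ i, DifferentiableAt ℝ (fun y => G y i) x) (k : ℝ) :
    divg (fun y i => F y i + k * G y i) x = divg F x + k * divg G x := by
  simp only [divg_eq_sum_pd, pd_add (hF _) ((hG _).const_mul k), pd_const_mul (hG _),
    Finset.sum_add_distrib, Finset.mul_sum]

lemma aGrad_add_const_mul (hf : DifferentiableAt ℝ f x) (hg : DifferentiableAt ℝ g x) (k : ℝ) :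
    aGrad a (fun y => f y + k * g y) x = fun i => aGrad a f x i + k * aGrad a g x i := by
  funext i
  simp only [aGrad, pd_add hf (hg.const_mul k), pd_const_mul hg, Finset.mul_sum,
    ← Finset.sum_add_distrib, mul_add, mul_left_comm]

lemma Lop_add_const_mul (ha : ∀ i j, ContDiff ℝ 1 fun y => a y i j)
    (hf : ContDiffAt ℝ 2 f x) (hg : ContDiffAt ℝ 2 g x) (k : ℝ) :
    Lop a b (fun y => f y + k * g y) x = Lop a b f x + k * Lop a b g x := by
  have hgrad : aGrad a (fun y => f y + k * g y) =ᶠ[𝓝 x]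
      fun y i => aGrad a f y i + k * aGrad a g y i := by
    filter_upwards [hf.eventually (by simp), hg.eventually (by simp)] with y hfy hgy
    exact aGrad_add_const_mul (hfy.differentiableAt (by simp)) (hgy.differentiableAt (by simp)) k
  have hf' := hf.differentiableAt (by simp)
  have hg' := hg.differentiableAt (by simp)
  rw [Lop, Lop, Lop, hgrad.divg_eq, divg_add_const_mul
    (fun i => (contDiffAt_aGrad ha hf i).differentiableAt one_ne_zero)
    (fun i => (contDiffAt_aGrad ha hg i).differentiableAt one_ne_zero)]
  simp only [pd_add hf' (hg'.const_mul k), pd_const_mul hg', mul_add, Finset.sum_add_distrib,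
    Finset.mul_sum, mul_left_comm]
  ring

def greenField (a : (Fin d → ℝ) → Matrix (Fin d) (Fin d) ℝ) (b : (Fin d → ℝ) → (Fin d → ℝ))
    (f g : (Fin d → ℝ) → ℝ) (y : Fin d → ℝ) (i : Fin d) : ℝ :=
  f y * aGrad a g y i - g y * aGrad a f y i + f y * g y * b y i

lemma divg_greenField (ha : ∀ i j, ContDiff ℝ 1 fun y => a y i j)
    (hsym : ∀ y i j, a y i j = a y j i) (hb : ∀ i, ContDiff ℝ 1 fun y => b y i)
    (hf : ContDiffAt ℝ 2 f x) (hg : ContDiffAt ℝ 2 g x) :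
    divg (greenField a b f g) x = f x * Lop a b g x - g x * Ladj a b f x := by
  have df : DifferentiableAt ℝ f x := hf.differentiableAt (by simp)
  have dg : DifferentiableAt ℝ g x := hg.differentiableAt (by simp)
  have dGf i := (contDiffAt_aGrad ha hf i).differentiableAt one_ne_zero
  have dGg i := (contDiffAt_aGrad ha hg i).differentiableAt one_ne_zero
  have db i := ((hb i).differentiable one_ne_zero) x
  have hcomp : ∀ i, pd (fun y => greenField a b f g y i) i x
      = f x * pd (fun y => aGrad a g y i) i x - g x * pd (fun y => aGrad a f y i) i x
        + f x * g x * pd (fun y => b y i) i x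
        + (aGrad a g x i * pd f i x - aGrad a f x i * pd g i x)
        + (f x * (b x i * pd g i x) + g x * (b x i * pd f i x)) := by
    intro i
    unfold greenField
    rw [pd_add ((df.fun_mul (dGg i)).fun_sub (dg.fun_mul (dGf i)))
        ((df.fun_mul dg).fun_mul (db i)),
      pd_sub (df.fun_mul (dGg i)) (dg.fun_mul (dGf i)), pd_mul df (dGg i), pd_mul dg (dGf i),
      pd_mul (df.fun_mul dg) (db i), pd_mul df dg]
    ring
  -- the terms `∇f · a∇g` and `∇g · a∇f` cancel because `a` is symmetric
  have hcross : ∑ i, aGrad a g x i * pd f i x = ∑ i, aGrad a f x i * pd g i x := by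
    simp only [aGrad, Finset.sum_mul]
    rw [Finset.sum_comm]
    exact Finset.sum_congr rfl fun i _ => Finset.sum_congr rfl fun j _ => by
      rw [hsym x j i]; ring
  rw [divg_eq_sum_pd, Finset.sum_congr rfl fun i _ => hcomp i]
  simp only [Lop, Ladj, divg_eq_sum_pd, Finset.sum_add_distrib, Finset.sum_sub_distrib,
    ← Finset.mul_sum, hcross]
  ring

end Calculus

section Domain

variable {d : ℕ} {D : Set (Fin d → ℝ)} {a : (Fin d → ℝ) → Matrix (Fin d) (Fin d) ℝ}
  {b : (Fin d → ℝ) → (Fin d → ℝ)} {β : ℝ} {ξ f g u ut : (Fin d → ℝ) → ℝ}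

lemma c2Near_iff : C2Near D f ↔ ∀ x ∈ closure D, ContDiffAt ℝ 2 f x := by
  refine ⟨fun ⟨U, hU, hDU, hf⟩ x hx => hf.contDiffAt (hU.mem_nhds (hDU hx)), fun h => ?_⟩
  exact ⟨{x | ContDiffAt ℝ 2 f x},
    isOpen_iff_mem_nhds.2 fun x (hx : ContDiffAt ℝ 2 f x) => hx.eventually (by simp), h,
    fun x (hx : ContDiffAt ℝ 2 f x) => hx.contDiffWithinAt⟩

lemma C2Near.add_smul (hf : C2Near D f) (hg : C2Near D g) (k : ℝ) : C2Near D (f + k • g) := by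
  rw [c2Near_iff] at *
  exact fun x hx => (hf x hx).add ((hg x hx).const_smul k)

lemma C1NearVF.of_contDiffAt {F : (Fin d → ℝ) → (Fin d → ℝ)}
    (h : ∀ x ∈ closure D, ∀ i, ContDiffAt ℝ 1 (fun y => F y i) x) : C1NearVF D F :=
  ⟨{x | ∀ i, ContDiffAt ℝ 1 (fun y => F y i) x},
    isOpen_iff_mem_nhds.2 fun x hx => eventually_all.2 fun i => (hx i).eventually (by simp), h,
    fun i x hx => (hx i).contDiffWithinAt⟩

lemma integrableOn_of_continuousAt (hDb : Bornology.IsBounded D)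
    (hf : ∀ x ∈ closure D, ContinuousAt f x) : IntegrableOn f D :=
  (ContinuousOn.integrableOn_compact hDb.isCompact_closure
    fun x hx => (hf x hx).continuousWithinAt).mono_set subset_closure

lemma C2Near.integrableOn_mul (hDb : Bornology.IsBounded D)
    (hξ : ∀ x ∈ closure D, ContinuousAt ξ x) (hf : C2Near D f) :
    IntegrableOn (fun x => f x * ξ x) D :=
  integrableOn_of_continuousAt hDb fun x hx =>
    ((c2Near_iff.1 hf x hx).continuousAt).mul (hξ x hx)

lemma integrableOn_Eform (hDb : Bornology.IsBounded D)
    (ha : ∀ i j, ContDiff ℝ 1 fun y => a y i j) (hb : ∀ i, ContDiff ℝ 1 fun y => b y i)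
    (hf : C2Near D f) (hg : C2Near D g) :
    IntegrableOn (fun x => f x * (β * g x - Lop a b g x)) D :=
  integrableOn_of_continuousAt hDb fun x hx =>
    have hg' := c2Near_iff.1 hg x hx
    (c2Near_iff.1 hf x hx).continuousAt.mul
      ((continuousAt_const.mul hg'.continuousAt).sub (continuousAt_Lop ha hb hg'))

lemma integrableOn_Eform_adjoint (hDb : Bornology.IsBounded D)
    (ha : ∀ i j, ContDiff ℝ 1 fun y => a y i j) (hb : ∀ i, ContDiff ℝ 1 fun y => b y i)
    (hf : C2Near D f) (hg : C2Near D g) :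
    IntegrableOn (fun x => g x * (β * f x - Ladj a b f x)) D :=
  integrableOn_of_continuousAt hDb fun x hx =>
    have hf' := c2Near_iff.1 hf x hx
    (c2Near_iff.1 hg x hx).continuousAt.mul
      ((continuousAt_const.mul hf'.continuousAt).sub (continuousAt_Ladj ha hb hf'))

lemma MemM.add_smul {δ ε : ℝ} (hDb : Bornology.IsBounded D)
    (hξ : ∀ x ∈ closure D, ContinuousAt ξ x) (hf : MemM D ξ δ f) (hg : MemM D ξ ε g) (k : ℝ) :
    MemM D ξ (δ + k * ε) (f + k • g) := by
  obtain ⟨hf2, hf0, hfξ⟩ := hf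
  obtain ⟨hg2, hg0, hgξ⟩ := hg
  refine ⟨hf2.add_smul hg2 k, fun x hx => by simp [hf0 x hx, hg0 x hx], ?_⟩
  simp only [Pi.add_apply, Pi.smul_apply, smul_eq_mul, add_mul, mul_assoc]
  rw [integral_add (hf2.integrableOn_mul hDb hξ) ((hg2.integrableOn_mul hDb hξ).const_mul k),
    integral_const_mul, hfξ, hgξ]

lemma Eform_add_smul_left (hDb : Bornology.IsBounded D)
    (ha : ∀ i j, ContDiff ℝ 1 fun y => a y i j) (hb : ∀ i, ContDiff ℝ 1 fun y => b y i)
    {f₁ f₂ : (Fin d → ℝ) → ℝ} (hf₁ : C2Near D f₁) (hf₂ : C2Near D f₂) (hg : C2Near D g) (k : ℝ) :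
    Eform D a b β (f₁ + k • f₂) g = Eform D a b β f₁ g + k * Eform D a b β f₂ g := by
  simp only [Eform, Pi.add_apply, Pi.smul_apply, smul_eq_mul, add_mul, mul_assoc]
  rw [integral_add (integrableOn_Eform hDb ha hb hf₁ hg)
    ((integrableOn_Eform hDb ha hb hf₂ hg).const_mul k), integral_const_mul]

lemma Eform_add_smul_right (hD : MeasurableSet D) (hDb : Bornology.IsBounded D)
    (ha : ∀ i j, ContDiff ℝ 1 fun y => a y i j) (hb : ∀ i, ContDiff ℝ 1 fun y => b y i)
    {g₁ g₂ : (Fin d → ℝ) → ℝ} (hf : C2Near D f) (hg₁ : C2Near D g₁) (hg₂ : C2Near D g₂) (k : ℝ) :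
    Eform D a b β f (g₁ + k • g₂) = Eform D a b β f g₁ + k * Eform D a b β f g₂ := by
  have hpt : ∀ x ∈ D, f x * (β * (g₁ + k • g₂) x - Lop a b (g₁ + k • g₂) x)
      = f x * (β * g₁ x - Lop a b g₁ x) + k * (f x * (β * g₂ x - Lop a b g₂ x)) :=
    fun x hx => by
      have hx' := subset_closure hx
      have hL := Lop_add_const_mul (b := b) ha (c2Near_iff.1 hg₁ x hx') (c2Near_iff.1 hg₂ x hx') k
      simp only [Pi.add_apply, Pi.smul_apply, smul_eq_mul]
      rw [show g₁ + k • g₂ = fun y => g₁ y + k * g₂ y from rfl, hL]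
      ring
  rw [Eform, setIntegral_congr_fun hD hpt, integral_add (integrableOn_Eform hDb ha hb hf hg₁)
    ((integrableOn_Eform hDb ha hb hf hg₂).const_mul k), integral_const_mul]
  rfl

lemma Eform_eq_integral_Ladj (hD : MeasurableSet D) (hDb : Bornology.IsBounded D)
    (hdiv : DivProp D) (ha : ∀ i j, ContDiff ℝ 1 fun y => a y i j)
    (hsym : ∀ y i j, a y i j = a y j i) (hb : ∀ i, ContDiff ℝ 1 fun y => b y i)
    (hf : C2Near D f) (hf0 : ∀ x ∈ frontier D, f x = 0)
    (hg : C2Near D g) (hg0 : ∀ x ∈ frontier D, g x = 0) :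
    Eform D a b β f g = ∫ x in D, g x * (β * f x - Ladj a b f x) := by
  have hf' := c2Near_iff.1 hf
  have hg' := c2Near_iff.1 hg
  have hflux : ∫ x in D, divg (greenField a b f g) x = 0 := by
    refine hdiv _ (C1NearVF.of_contDiffAt fun x hx i => ?_) fun x hx => ?_
    · have hf1 := (hf' x hx).of_le one_le_two
      have hg1 := (hg' x hx).of_le one_le_two
      exact ((hf1.mul (contDiffAt_aGrad ha (hg' x hx) i)).sub
        (hg1.mul (contDiffAt_aGrad ha (hf' x hx) i))).add ((hf1.mul hg1).mul (hb i).contDiffAt)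
    · funext i
      simp [greenField, hf0 x hx, hg0 x hx]
  rw [Eform, ← sub_eq_zero, ← integral_sub (integrableOn_Eform hDb ha hb hf hg)
    (integrableOn_Eform_adjoint hDb ha hb hf hg), ← neg_eq_zero, ← integral_neg, ← hflux]
  refine setIntegral_congr_fun hD fun x hx => ?_
  rw [divg_greenField ha hsym hb (hf' x (subset_closure hx)) (hg' x (subset_closure hx))]
  ring

lemma Eform_eq_integral_of_solution (hD : MeasurableSet D)
    (hu : ∀ x ∈ D, β * u x - Lop a b u x = ξ x) (f : (Fin d → ℝ) → ℝ) :
    Eform D a b β f u = ∫ x in D, f x * ξ x :=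
  setIntegral_congr_fun hD fun x hx => by rw [hu x hx]

lemma Eform_eq_integral_of_adjoint_solution (hD : MeasurableSet D)
    (hDb : Bornology.IsBounded D) (hdiv : DivProp D) (ha : ∀ i j, ContDiff ℝ 1 fun y => a y i j)
    (hsym : ∀ y i j, a y i j = a y j i) (hb : ∀ i, ContDiff ℝ 1 fun y => b y i)
    (hut : C2Near D ut) (hut0 : ∀ x ∈ frontier D, ut x = 0)
    (huteq : ∀ x ∈ D, β * ut x - Ladj a b ut x = ξ x)
    (hg : C2Near D g) (hg0 : ∀ x ∈ frontier D, g x = 0) :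
    Eform D a b β ut g = ∫ x in D, g x * ξ x := by
  rw [Eform_eq_integral_Ladj hD hDb hdiv ha hsym hb hut hut0 hg hg0]
  exact setIntegral_congr_fun hD fun x hx => by rw [huteq x hx]

lemma Eform_add_inv_smul_solutions (hD : MeasurableSet D) (hDb : Bornology.IsBounded D)
    (hdiv : DivProp D) (ha : ∀ i j, ContDiff ℝ 1 fun y => a y i j)
    (hsym : ∀ y i j, a y i j = a y j i) (hb : ∀ i, ContDiff ℝ 1 fun y => b y i)
    {r : (Fin d → ℝ) → ℝ} (hr : MemM D ξ 0 r)
    (hu : C2Near D u) (hu0 : ∀ x ∈ frontier D, u x = 0)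
    (hueq : ∀ x ∈ D, β * u x - Lop a b u x = ξ x)
    (hut : C2Near D ut) (hut0 : ∀ x ∈ frontier D, ut x = 0)
    (huteq : ∀ x ∈ D, β * ut x - Ladj a b ut x = ξ x)
    {c : ℝ} (hc : ∫ x in D, u x * ξ x = c) (hc0 : c ≠ 0) :
    Eform D a b β (r + c⁻¹ • ut) (r + c⁻¹ • u) = 1 / c + Eform D a b β r r := by
  obtain ⟨hr2, hr0, hrξ⟩ := hr
  rw [Eform_add_smul_left hDb ha hb hr2 hut (hr2.add_smul hu _),
    Eform_add_smul_right hD hDb ha hb hr2 hr2 hu, Eform_add_smul_right hD hDb ha hb hut hr2 hu,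
    Eform_eq_integral_of_solution hD hueq,
    Eform_eq_integral_of_adjoint_solution hD hDb hdiv ha hsym hb hut hut0 huteq hr2 hr0,
    Eform_eq_integral_of_adjoint_solution hD hDb hdiv ha hsym hb hut hut0 huteq hu hu0, hrξ, hc]
  field_simp
  ring

end Domain

theorem stmt7_general {d : ℕ} (D : Set (Fin d → ℝ)) (hD : IsOpen D)
    (hDb : Bornology.IsBounded D) (hdiv : DivProp D)
    (a : (Fin d → ℝ) → Matrix (Fin d) (Fin d) ℝ)
    (ha : ∀ i j, ContDiff ℝ 1 (fun x => a x i j))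
    (hsym : ∀ x i j, a x i j = a x j i)
    (b : (Fin d → ℝ) → (Fin d → ℝ)) (hb : ∀ i, ContDiff ℝ 1 (fun x => b x i))
    (β : ℝ)
    (ξ : (Fin d → ℝ) → ℝ)
    (hξ : ∃ U : Set (Fin d → ℝ), IsOpen U ∧ closure D ⊆ U ∧ ContinuousOn ξ U)
    (u ut : (Fin d → ℝ) → ℝ)
    (hu : C2Near D u) (hu0 : ∀ x ∈ frontier D, u x = 0)
    (hueq : ∀ x ∈ D, β * u x - Lop a b u x = ξ x)
    (hut : C2Near D ut) (hut0 : ∀ x ∈ frontier D, ut x = 0)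
    (huteq : ∀ x ∈ D, β * ut x - Ladj a b ut x = ξ x)
    (c : ℝ) (hc : c = ∫ x in D, u x * ξ x) (hc0 : c ≠ 0)
    (wbar what : (Fin d → ℝ) → ℝ)
    (hwbar : ∀ x, wbar x = (u x / c + ut x / c) / 2)
    (hwhat : ∀ x, what x = (u x / c - ut x / c) / 2) :
    (∀ f, MemM D ξ 1 f →
      Eform D a b β (f - what) (f + what)
        = 1 / c + Eform D a b β (f - wbar) (f - wbar)) ∧
    ((∀ h, MemM D ξ 0 h → 0 ≤ Eform D a b β h h) →
      ∀ f, MemM D ξ 1 f → 1 / c ≤ Eform D a b β (f - what) (f + what)) := by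
  have hDm := hD.measurableSet
  have hξD : ∀ x ∈ closure D, ContinuousAt ξ x := by
    obtain ⟨U, hU, hDU, hξU⟩ := hξ
    exact fun x hx => hξU.continuousAt (hU.mem_nhds (hDU hx))
  have hutξ : ∫ x in D, ut x * ξ x = c := by
    rw [← Eform_eq_integral_of_solution hDm hueq, hc,
      Eform_eq_integral_of_adjoint_solution hDm hDb hdiv ha hsym hb hut hut0 huteq hu hu0]
  have hr : ∀ f, MemM D ξ 1 f → MemM D ξ 0 (f - wbar) := fun f hf => by
    convert (hf.add_smul hDb hξD ⟨hu, hu0, hc.symm⟩ (-(2 * c)⁻¹)).add_smul hDb hξD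
      ⟨hut, hut0, hutξ⟩ (-(2 * c)⁻¹) using 1
    · field_simp
      ring
    · funext x
      simp only [Pi.sub_apply, Pi.add_apply, Pi.smul_apply, smul_eq_mul, hwbar]
      field_simp
      ring
  have hexpand : ∀ f, MemM D ξ 1 f →
      Eform D a b β (f - what) (f + what) = 1 / c + Eform D a b β (f - wbar) (f - wbar) := by
    intro f hf
    have hminus : f - what = (f - wbar) + c⁻¹ • ut := funext fun x => by
      simp only [Pi.sub_apply, Pi.add_apply, Pi.smul_apply, smul_eq_mul, hwbar, hwhat]; ring
    have hplus : f + what = (f - wbar) + c⁻¹ • u := funext fun x => by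
      simp only [Pi.sub_apply, Pi.add_apply, Pi.smul_apply, smul_eq_mul, hwbar, hwhat]; ring
    rw [hminus, hplus]
    exact Eform_add_inv_smul_solutions hDm hDb hdiv ha hsym hb (hr f hf) hu hu0 hueq hut hut0
      huteq hc.symm hc0
  exact ⟨hexpand, fun hpos f hf => by rw [hexpand f hf]; linarith [hpos _ (hr f hf)]⟩

/-- the expansion identity `ℰ_β(f−ŵ, f+ŵ) = 1/c + ℰ_β(f−w̄, f−w̄)` for `f ∈ M₁`,
and the resulting lower bound when `ℰ_β` is nonnegative on `M₀`. -/
theorem stmt7 {d : ℕ} (D : Set (Fin d → ℝ)) (hD : IsOpen D)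
    (hDb : Bornology.IsBounded D) (hdiv : DivProp D)
    (a : (Fin d → ℝ) → Matrix (Fin d) (Fin d) ℝ)
    (ha : ∀ i j, ContDiff ℝ 1 (fun x => a x i j))
    (hsym : ∀ x i j, a x i j = a x j i)
    (b : (Fin d → ℝ) → (Fin d → ℝ)) (hb : ∀ i, ContDiff ℝ 1 (fun x => b x i))
    (β : ℝ) (hβ : 0 ≤ β)
    (ξ : (Fin d → ℝ) → ℝ)
    (hξ : ∃ U : Set (Fin d → ℝ), IsOpen U ∧ closure D ⊆ U ∧ ContinuousOn ξ U)
    (u ut : (Fin d → ℝ) → ℝ)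
    (hu : C2Near D u) (hu0 : ∀ x ∈ frontier D, u x = 0)
    (hueq : ∀ x ∈ D, β * u x - Lop a b u x = ξ x)
    (hut : C2Near D ut) (hut0 : ∀ x ∈ frontier D, ut x = 0)
    (huteq : ∀ x ∈ D, β * ut x - Ladj a b ut x = ξ x)
    (c : ℝ) (hc : c = ∫ x in D, u x * ξ x) (hc0 : c ≠ 0)
    (wbar what : (Fin d → ℝ) → ℝ)
    (hwbar : ∀ x, wbar x = (u x / c + ut x / c) / 2)
    (hwhat : ∀ x, what x = (u x / c - ut x / c) / 2) :
    (∀ f, MemM D ξ 1 f →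
      Eform D a b β (f - what) (f + what)
        = 1 / c + Eform D a b β (f - wbar) (f - wbar)) ∧
    ((∀ h, MemM D ξ 0 h → 0 ≤ Eform D a b β h h) →
      ∀ f, MemM D ξ 1 f → 1 / c ≤ Eform D a b β (f - what) (f + what)) :=
  stmt7_general D hD hDb hdiv a ha hsym b hb β ξ hξ u ut hu hu0 hueq hut hut0 huteq c hc hc0 wbar
    what hwbar hwhat
end
end

section
/- (Theorem 3.1(3.3), symmetric case.) Let D ⊆ ℝ^d be a bounded open set with the divergence property, let a = (a_{ij}) : ℝ^d → ℝ^{d×d} have C¹ entries with a symmetric and a(x) positive semidefinite for all x ∈ D, let b ≡ 0 (so L = ∇·a∇ is formally self-adjoint), and let β ≥ 0. Let ξ be continuous on an open neighborhood of the closure of D and let u be C² on an open neighborhood of the closure of D, vanishing on ∂D, with (β−L)u = ξ on D, and suppose c = ∫_D u ξ dx > 0. Then for every f ∈ M₁ one has ℰ_β(f,f) ≥ 1/c, with equality for f = u/c; hence inf over f ∈ M₁ of ℰ_β(f,f) = 1/∫_D u ξ dx. -/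
open MeasureTheory

noncomputable section

/-! For `f ∈ M₁` put `h = f - u/c`. Integrating by parts turns `ℰ_β` into the Dirichlet form
`Q(f,g) = ∫_D (β f g + ∇f·a∇g)`, and the equation `(β-L)u = ξ` gives `Q(f,u) = ∫_D f ξ = 1` and
`Q(u,u) = c`. Expanding the symmetric form `Q` then yields `ℰ_β(f,f) = 1/c + Q(h,h)`, and
`Q(h,h) ≥ 0` because `β ≥ 0` and `a` is positive semidefinite; `h = 0` when `f = u/c`. -/

variable {d : ℕ}

def dirichletDensity (a : (Fin d → ℝ) → Matrix (Fin d) (Fin d) ℝ) (β : ℝ)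
    (f g : (Fin d → ℝ) → ℝ) (x : Fin d → ℝ) : ℝ :=
  β * f x * g x + quadF a f g x

def dirichletForm (D : Set (Fin d → ℝ)) (a : (Fin d → ℝ) → Matrix (Fin d) (Fin d) ℝ) (β : ℝ)
    (f g : (Fin d → ℝ) → ℝ) : ℝ :=
  ∫ x in D, dirichletDensity a β f g x

section Regularity

variable {U : Set (Fin d → ℝ)} {a : (Fin d → ℝ) → Matrix (Fin d) (Fin d) ℝ}

lemma C2Near.exists_common {D : Set (Fin d → ℝ)} {f g : (Fin d → ℝ) → ℝ}
    (hf : C2Near D f) (hg : C2Near D g) :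
    ∃ U, IsOpen U ∧ closure D ⊆ U ∧ ContDiffOn ℝ 2 f U ∧ ContDiffOn ℝ 2 g U := by
  obtain ⟨Uf, hUf, hDUf, hfC⟩ := hf
  obtain ⟨Ug, hUg, hDUg, hgC⟩ := hg
  exact ⟨Uf ∩ Ug, hUf.inter hUg, Set.subset_inter hDUf hDUg,
    hfC.mono Set.inter_subset_left, hgC.mono Set.inter_subset_right⟩

lemma C2Near.differentiableAt {D : Set (Fin d → ℝ)} {f : (Fin d → ℝ) → ℝ}
    (hf : C2Near D f) {x : Fin d → ℝ} (hx : x ∈ closure D) : DifferentiableAt ℝ f x := by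
  obtain ⟨U, hU, hDU, hfC⟩ := hf
  exact (hfC.differentiableOn (by norm_num)).differentiableAt (hU.mem_nhds (hDU hx))

lemma pd_contDiffOn (hU : IsOpen U) {g : (Fin d → ℝ) → ℝ} (hg : ContDiffOn ℝ 2 g U)
    (j : Fin d) : ContDiffOn ℝ 1 (pd g j) U :=
  (hg.fderiv_of_isOpen hU (by norm_num)).clm_apply contDiffOn_const

lemma aGrad_contDiffOn (hU : IsOpen U) (ha : ∀ i j, ContDiff ℝ 1 (fun x => a x i j))
    {g : (Fin d → ℝ) → ℝ} (hg : ContDiffOn ℝ 2 g U) (i : Fin d) :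
    ContDiffOn ℝ 1 (fun y => aGrad a g y i) U :=
  ContDiffOn.sum fun j _ => (ha i j).contDiffOn.mul (pd_contDiffOn hU hg j)

lemma divg_continuousOn (hU : IsOpen U) {F : (Fin d → ℝ) → (Fin d → ℝ)}
    (hF : ∀ i, ContDiffOn ℝ 1 (fun y => F y i) U) : ContinuousOn (divg F) U :=
  continuousOn_finsetSum _ fun i _ =>
    ((hF i).continuousOn_fderiv_of_isOpen hU le_rfl).clm_apply continuousOn_const

lemma dirichletDensity_continuousOn (hU : IsOpen U) (ha : ∀ i j, ContDiff ℝ 1 (fun x => a x i j))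
    (β : ℝ) {f g : (Fin d → ℝ) → ℝ} (hf : ContDiffOn ℝ 2 f U) (hg : ContDiffOn ℝ 2 g U) :
    ContinuousOn (dirichletDensity a β f g) U := by
  refine ((continuousOn_const.mul hf.continuousOn).mul hg.continuousOn).add ?_
  exact continuousOn_finsetSum _ fun i _ => continuousOn_finsetSum _ fun j _ =>
    ((pd_contDiffOn hU hf i).continuousOn.mul (ha i j).continuous.continuousOn).mul
      (pd_contDiffOn hU hg j).continuousOn

end Regularity

lemma Bornology.IsBounded.integrableOn_of_continuousOn {X E : Type*} [MetricSpace X]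
    [ProperSpace X] [MeasurableSpace X] [OpensMeasurableSpace X] {μ : Measure X}
    [IsFiniteMeasureOnCompacts μ] [NormedAddCommGroup E] {D U : Set X}
    (hDb : Bornology.IsBounded D) (hDU : closure D ⊆ U) {φ : X → E}
    (hφ : ContinuousOn φ U) : IntegrableOn φ D μ :=
  ((hφ.mono hDU).integrableOn_compact hDb.isCompact_closure).mono_set subset_closure

lemma integrableOn_dirichletDensity {D : Set (Fin d → ℝ)} (hDb : Bornology.IsBounded D)
    {a : (Fin d → ℝ) → Matrix (Fin d) (Fin d) ℝ} (ha : ∀ i j, ContDiff ℝ 1 (fun x => a x i j))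
    (β : ℝ) {f g : (Fin d → ℝ) → ℝ} (hf : C2Near D f) (hg : C2Near D g) :
    IntegrableOn (dirichletDensity a β f g) D := by
  obtain ⟨U, hU, hDU, hfC, hgC⟩ := hf.exists_common hg
  exact hDb.integrableOn_of_continuousOn hDU (dirichletDensity_continuousOn hU ha β hfC hgC)

section Calculus

variable {a : (Fin d → ℝ) → Matrix (Fin d) (Fin d) ℝ} {f g : (Fin d → ℝ) → ℝ} {x : Fin d → ℝ}

lemma divg_mul_aGrad {U : Set (Fin d → ℝ)} (hU : IsOpen U)
    (ha : ∀ i j, ContDiff ℝ 1 (fun x => a x i j))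
    (hf : ContDiffOn ℝ 2 f U) (hg : ContDiffOn ℝ 2 g U) (hx : x ∈ U) :
    divg (fun y i => f y * aGrad a g y i) x = quadF a f g x + f x * divg (aGrad a g) x := by
  have hfx : DifferentiableAt ℝ f x :=
    (hf.differentiableOn (by norm_num)).differentiableAt (hU.mem_nhds hx)
  have hGx : ∀ i, DifferentiableAt ℝ (fun y => aGrad a g y i) x := fun i =>
    ((aGrad_contDiffOn hU ha hg i).differentiableOn one_ne_zero).differentiableAt
      (hU.mem_nhds hx)
  simp only [divg, fderiv_fun_mul hfx (hGx _), add_apply, smul_apply, smul_eq_mul,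
    Finset.sum_add_distrib, Finset.mul_sum]
  rw [add_comm]
  congr 1
  simp only [quadF, aGrad, Finset.sum_mul]
  exact Finset.sum_congr rfl fun i _ => Finset.sum_congr rfl fun j _ => by simp only [pd]; ring

lemma pd_sub_div_const (hf : DifferentiableAt ℝ f x) (hg : DifferentiableAt ℝ g x) (c : ℝ)
    (i : Fin d) : pd (fun y => f y - g y / c) i x = pd f i x - pd g i x / c := by
  simp only [div_eq_inv_mul, pd, fderiv_fun_sub hf (hg.const_mul c⁻¹), fderiv_const_mul hg,
    sub_apply, smul_apply, smul_eq_mul]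

lemma quadF_comm (hsym : ∀ i j, a x i j = a x j i) (f g : (Fin d → ℝ) → ℝ) :
    quadF a f g x = quadF a g f x := by
  rw [quadF, Finset.sum_comm]
  exact Finset.sum_congr rfl fun j _ => Finset.sum_congr rfl fun i _ => by rw [hsym i j]; ring

lemma dirichletDensity_sub_div_const (hsym : ∀ i j, a x i j = a x j i) (β : ℝ)
    (hf : DifferentiableAt ℝ f x) (hg : DifferentiableAt ℝ g x) (c : ℝ) :
    dirichletDensity a β (fun y => f y - g y / c) (fun y => f y - g y / c) x
      = dirichletDensity a β f f x - 2 / c * dirichletDensity a β f g x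
        + dirichletDensity a β g g x / c ^ 2 := by
  have hquad : quadF a (fun y => f y - g y / c) (fun y => f y - g y / c) x
      = quadF a f f x - quadF a f g x / c - quadF a g f x / c + quadF a g g x / c ^ 2 := by
    simp only [quadF, pd_sub_div_const hf hg, Finset.sum_div, ← Finset.sum_sub_distrib,
      ← Finset.sum_add_distrib]
    exact Finset.sum_congr rfl fun i _ => Finset.sum_congr rfl fun j _ => by ring
  simp only [dirichletDensity, hquad, quadF_comm hsym g f]
  ring

end Calculus

section Forms

variable {D : Set (Fin d → ℝ)} {a : (Fin d → ℝ) → Matrix (Fin d) (Fin d) ℝ} {β : ℝ}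

lemma eform_eq_dirichletForm (hD : IsOpen D) (hDb : Bornology.IsBounded D) (hdiv : DivProp D)
    (ha : ∀ i j, ContDiff ℝ 1 (fun x => a x i j)) {f g : (Fin d → ℝ) → ℝ}
    (hf : C2Near D f) (hg : C2Near D g) (hf0 : ∀ x ∈ frontier D, f x = 0) :
    Eform D a 0 β f g = dirichletForm D a β f g := by
  obtain ⟨U, hU, hDU, hfC, hgC⟩ := hf.exists_common hg
  set F : (Fin d → ℝ) → (Fin d → ℝ) := fun y i => f y * aGrad a g y i
  have hFC : ∀ i, ContDiffOn ℝ 1 (fun y => F y i) U := fun i =>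
    (hfC.of_le (by norm_num)).mul (aGrad_contDiffOn hU ha hgC i)
  have hF0 : ∀ x ∈ frontier D, F x = 0 := fun x hx => funext fun i => by simp [F, hf0 x hx]
  have hpt : ∀ x ∈ D, f x * (β * g x - Lop a 0 g x) = dirichletDensity a β f g x - divg F x :=
    fun x hx => by
      have hLeibniz : divg F x = quadF a f g x + f x * divg (aGrad a g) x :=
        divg_mul_aGrad hU ha hfC hgC (hDU (subset_closure hx))
      simp only [Lop, hLeibniz, dirichletDensity, Pi.zero_apply, zero_mul, Finset.sum_const_zero,
        add_zero]
      ring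
  rw [Eform, setIntegral_congr_fun hD.measurableSet hpt,
    integral_sub (integrableOn_dirichletDensity hDb ha β ⟨U, hU, hDU, hfC⟩ ⟨U, hU, hDU, hgC⟩)
      (hDb.integrableOn_of_continuousOn hDU (divg_continuousOn hU hFC)),
    hdiv F ⟨U, hU, hDU, hFC⟩ hF0, sub_zero, dirichletForm]

lemma dirichletForm_self_nonneg (hD : IsOpen D) (hβ : 0 ≤ β)
    (hpsd : ∀ x ∈ D, ∀ v : Fin d → ℝ, 0 ≤ ∑ i, ∑ j, v i * a x i j * v j)
    (h : (Fin d → ℝ) → ℝ) : 0 ≤ dirichletForm D a β h h :=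
  setIntegral_nonneg hD.measurableSet fun x hx =>
    add_nonneg (by rw [mul_assoc]; exact mul_nonneg hβ (mul_self_nonneg _))
      (hpsd x hx fun i => pd h i x)

lemma dirichletForm_sub_div_const (hD : IsOpen D) (hDb : Bornology.IsBounded D)
    (ha : ∀ i j, ContDiff ℝ 1 (fun x => a x i j)) (hsym : ∀ x i j, a x i j = a x j i)
    {f g : (Fin d → ℝ) → ℝ} (hf : C2Near D f) (hg : C2Near D g) (c : ℝ) :
    dirichletForm D a β (fun y => f y - g y / c) (fun y => f y - g y / c)
      = dirichletForm D a β f f - 2 / c * dirichletForm D a β f g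
        + dirichletForm D a β g g / c ^ 2 := by
  have hpt : ∀ x ∈ D, dirichletDensity a β (fun y => f y - g y / c) (fun y => f y - g y / c) x
      = dirichletDensity a β f f x - 2 / c * dirichletDensity a β f g x
        + dirichletDensity a β g g x / c ^ 2 := fun x hx =>
    dirichletDensity_sub_div_const (hsym x) β (hf.differentiableAt (subset_closure hx))
      (hg.differentiableAt (subset_closure hx)) c
  have hff := integrableOn_dirichletDensity hDb ha β hf hf
  have hfg := integrableOn_dirichletDensity hDb ha β hf hg
  have hgg := integrableOn_dirichletDensity hDb ha β hg hg
  rw [dirichletForm, setIntegral_congr_fun hD.measurableSet hpt, integral_add, integral_sub,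
    integral_const_mul, integral_div, dirichletForm, dirichletForm, dirichletForm]
  · exact hff
  · exact hfg.const_mul _
  · exact hff.sub (hfg.const_mul _)
  · exact hgg.div_const _

lemma eform_self_eq_inv_add_dirichletForm (hD : IsOpen D) (hDb : Bornology.IsBounded D)
    (hdiv : DivProp D) (ha : ∀ i j, ContDiff ℝ 1 (fun x => a x i j))
    (hsym : ∀ x i j, a x i j = a x j i) {ξ u : (Fin d → ℝ) → ℝ} (hu : C2Near D u) (hu0 : ∀ x ∈ frontier D, u x = 0)
    (hueq : ∀ x ∈ D, β * u x - Lop a 0 u x = ξ x) {c : ℝ} (hc : c = ∫ x in D, u x * ξ x)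
    (hc0 : c ≠ 0) {f : (Fin d → ℝ) → ℝ} (hf : MemM D ξ 1 f) :
    Eform D a 0 β f f
      = 1 / c + dirichletForm D a β (fun x => f x - u x / c) (fun x => f x - u x / c) := by
  obtain ⟨hfC, hf0, hfξ⟩ := hf
  have hEξ : ∀ g, Eform D a 0 β g u = ∫ x in D, g x * ξ x := fun g =>
    setIntegral_congr_fun hD.measurableSet fun x hx => by rw [hueq x hx]
  have hfu : dirichletForm D a β f u = 1 := by
    rw [← eform_eq_dirichletForm hD hDb hdiv ha hfC hu hf0, hEξ, hfξ]
  have huu : dirichletForm D a β u u = c := by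
    rw [← eform_eq_dirichletForm hD hDb hdiv ha hu hu hu0, hEξ, hc]
  rw [dirichletForm_sub_div_const hD hDb ha hsym hfC hu, hfu, huu,
    eform_eq_dirichletForm hD hDb hdiv ha hfC hfC hf0]
  field_simp
  ring

end Forms

theorem stmt9_general {d : ℕ} (D : Set (Fin d → ℝ)) (hD : IsOpen D)
    (hDb : Bornology.IsBounded D) (hdiv : DivProp D)
    (a : (Fin d → ℝ) → Matrix (Fin d) (Fin d) ℝ)
    (ha : ∀ i j, ContDiff ℝ 1 (fun x => a x i j))
    (hsym : ∀ x i j, a x i j = a x j i)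
    (hpsd : ∀ x ∈ D, ∀ v : Fin d → ℝ, 0 ≤ ∑ i, ∑ j, v i * a x i j * v j)
    (β : ℝ) (hβ : 0 ≤ β)
    (ξ : (Fin d → ℝ) → ℝ)
    (u : (Fin d → ℝ) → ℝ)
    (hu : C2Near D u) (hu0 : ∀ x ∈ frontier D, u x = 0)
    (hueq : ∀ x ∈ D, β * u x - Lop a 0 u x = ξ x)
    (c : ℝ) (hc : c = ∫ x in D, u x * ξ x) (hcpos : 0 < c) :
    (∀ f, MemM D ξ 1 f → 1 / c ≤ Eform D a 0 β f f) ∧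
    MemM D ξ 1 (fun x => u x / c) ∧
    Eform D a 0 β (fun x => u x / c) (fun x => u x / c) = 1 / c ∧
    (⨅ f : {f : (Fin d → ℝ) → ℝ // MemM D ξ 1 f}, Eform D a 0 β f.1 f.1)
      = 1 / (∫ x in D, u x * ξ x) := by
  have hsplit := fun f (hf : MemM D ξ 1 f) =>
    eform_self_eq_inv_add_dirichletForm hD hDb hdiv ha hsym hu hu0 hueq hc hcpos.ne' hf
  have hge : ∀ f, MemM D ξ 1 f → 1 / c ≤ Eform D a 0 β f f := fun f hf => by
    rw [hsplit f hf]
    linarith [dirichletForm_self_nonneg hD hβ hpsd (fun x => f x - u x / c)]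
  have hvM : MemM D ξ 1 (fun x => u x / c) := by
    obtain ⟨U, hU, hDU, huC⟩ := hu
    refine ⟨⟨U, hU, hDU, huC.div_const c⟩, fun x hx => by simp [hu0 x hx], ?_⟩
    simp_rw [div_mul_eq_mul_div]
    rw [integral_div, ← hc, div_self hcpos.ne']
  have hEvv : Eform D a 0 β (fun x => u x / c) (fun x => u x / c) = 1 / c := by
    simp [hsplit _ hvM, dirichletForm, dirichletDensity, quadF, pd]
  refine ⟨hge, hvM, hEvv, ?_⟩
  rw [← hc]
  exact IsLeast.csInf_eq ⟨⟨⟨_, hvM⟩, hEvv⟩, by rintro _ ⟨f, rfl⟩; exact hge f.1 f.2⟩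

/-- the symmetric case (3.3): `ℰ_β(f,f) ≥ 1/c` for `f ∈ M₁` with equality at
`f = u/c`, hence `inf_{f∈M₁} ℰ_β(f,f) = 1/∫_D uξ dx`. Here `b ≡ 0`, so `L = ∇·a∇`. -/
theorem stmt9 {d : ℕ} (D : Set (Fin d → ℝ)) (hD : IsOpen D)
    (hDb : Bornology.IsBounded D) (hdiv : DivProp D)
    (a : (Fin d → ℝ) → Matrix (Fin d) (Fin d) ℝ)
    (ha : ∀ i j, ContDiff ℝ 1 (fun x => a x i j))
    (hsym : ∀ x i j, a x i j = a x j i)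
    (hpsd : ∀ x ∈ D, ∀ v : Fin d → ℝ, 0 ≤ ∑ i, ∑ j, v i * a x i j * v j)
    (β : ℝ) (hβ : 0 ≤ β)
    (ξ : (Fin d → ℝ) → ℝ)
    (hξ : ∃ U : Set (Fin d → ℝ), IsOpen U ∧ closure D ⊆ U ∧ ContinuousOn ξ U)
    (u : (Fin d → ℝ) → ℝ)
    (hu : C2Near D u) (hu0 : ∀ x ∈ frontier D, u x = 0)
    (hueq : ∀ x ∈ D, β * u x - Lop a 0 u x = ξ x)
    (c : ℝ) (hc : c = ∫ x in D, u x * ξ x) (hcpos : 0 < c) :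
    (∀ f, MemM D ξ 1 f → 1 / c ≤ Eform D a 0 β f f) ∧
    MemM D ξ 1 (fun x => u x / c) ∧
    Eform D a 0 β (fun x => u x / c) (fun x => u x / c) = 1 / c ∧
    (⨅ f : {f : (Fin d → ℝ) → ℝ // MemM D ξ 1 f}, Eform D a 0 β f.1 f.1)
      = 1 / (∫ x in D, u x * ξ x) :=
  stmt9_general D hD hDb hdiv a ha hsym hpsd β hβ ξ u hu hu0 hueq c hc hcpos
end
end
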